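/- In the two-candidate reduced instance, for every B ⊆ {1, …, m}, setting W = {v_i : i ∈ B}: if candidate 1 uniquely wins the election restricted to W (i.e., |H_W ∩ τ⁻¹(1)| > |H_W ∩ τ⁻¹(0)|), then m − |B| = ℓ. -/

import Mathlib

/-- Vertices of the two-candidate reduced instance: the path vertices
`u_1, …, u_{ℓ(3m−1)}` (0-indexed as `u i` for `i : Fin (ℓ * (3 * m - 1))`, so `u_1` is
`u ⟨0, _⟩`), the vertex `r`, the vertices `v_1, …, v_m`, and the vertices `w_{j,k}` for
`j ∈ [m]`, `k ∈ [3ℓ]` (both 0-indexed). -/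
inductive V2 (ℓ m : ℕ) : Type
  | u (i : Fin (ℓ * (3 * m - 1))) : V2 ℓ m
  | r : V2 ℓ m
  | v (i : Fin m) : V2 ℓ m
  | w (j : Fin m) (k : Fin (3 * ℓ)) : V2 ℓ m
  deriving DecidableEq

/-- Base edge relation of the two-candidate reduced instance: `u_i ~ u_{i+1}`,
`u_{ℓ(3m−1)} ~ r`, `r ~ v_i` for all `i`, and `v_i ~ w_{j,k}` iff `k ∈ S i`. -/
def baseRel2 (ℓ m : ℕ) (S : Fin m → Finset (Fin (3 * ℓ))) :
    V2 ℓ m → V2 ℓ m → Prop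
  | .u i, .u i' => (i : ℕ) + 1 = (i' : ℕ)
  | .u i, .r => (i : ℕ) + 1 = ℓ * (3 * m - 1)
  | .r, .v _ => True
  | .v i, .w _ k => k ∈ S i
  | _, _ => False

/-- The graph of the two-candidate reduced instance. -/
def G2 (ℓ m : ℕ) (S : Fin m → Finset (Fin (3 * ℓ))) : SimpleGraph (V2 ℓ m) :=
  SimpleGraph.fromRel (baseRel2 ℓ m S)

/-- The voting function of the two-candidate reduced instance: `u`'s and `v`'s vote for
candidate `0`; `r` and the `w`'s vote for candidate `1`. -/
def τ2 (ℓ m : ℕ) : V2 ℓ m → Fin 2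
  | .u _ => 0
  | .r => 1
  | .v _ => 0
  | .w _ _ => 1

/-- The distinguished vertex `x = u_1`. -/
def x2 (ℓ m : ℕ) (h : 0 < ℓ * (3 * m - 1)) : V2 ℓ m := V2.u ⟨0, h⟩

/-- `HW G W x`: the set of vertices reachable from `x` in the subgraph of `G` induced on
the complement of `W` (each step of a connecting walk must avoid `W`). -/
def HW {V : Type*} (G : SimpleGraph V) (W : Set V) (x : V) : Set V :=
  {z | Relation.ReflTransGen (fun a b => G.Adj a b ∧ a ∉ W ∧ b ∉ W) x z}

/-- With two candidates, candidate `1` uniquely wins the election restricted to `W` iff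
`|H_W ∩ τ⁻¹(1)| > |H_W ∩ τ⁻¹(0)|`. -/
def wins2 (ℓ m : ℕ) (S : Fin m → Finset (Fin (3 * ℓ))) (x : V2 ℓ m)
    (W : Set (V2 ℓ m)) : Prop :=
  (HW (G2 ℓ m S) W x ∩ τ2 ℓ m ⁻¹' {0}).ncard <
    (HW (G2 ℓ m S) W x ∩ τ2 ℓ m ⁻¹' {1}).ncard

namespace CardComplAux

open Relation

variable {ℓ m : ℕ}

def Wset (B : Finset (Fin m)) : Set (V2 ℓ m) := {z | ∃ i ∈ B, z = V2.v i}

def Tset (S : Fin m → Finset (Fin (3 * ℓ))) (B : Finset (Fin m)) :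
    Finset (Fin (3 * ℓ)) := Bᶜ.biUnion S

def Hset (S : Fin m → Finset (Fin (3 * ℓ))) (B : Finset (Fin m)) : Set (V2 ℓ m) :=
  fun z => match z with
  | .u _ => True
  | .r => True
  | .v i => i ∉ B
  | .w _ k => k ∈ Tset S B

lemma mem_Hset_u (S : Fin m → Finset (Fin (3 * ℓ))) (B : Finset (Fin m)) (i) :
    (V2.u i : V2 ℓ m) ∈ Hset S B := trivial

lemma mem_Hset_r (S : Fin m → Finset (Fin (3 * ℓ))) (B : Finset (Fin m)) :
    (V2.r : V2 ℓ m) ∈ Hset S B := trivial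

lemma mem_Hset_v (S : Fin m → Finset (Fin (3 * ℓ))) (B : Finset (Fin m)) (i) :
    (V2.v i : V2 ℓ m) ∈ Hset S B ↔ i ∉ B := Iff.rfl

lemma mem_Hset_w (S : Fin m → Finset (Fin (3 * ℓ))) (B : Finset (Fin m)) (j k) :
    (V2.w j k : V2 ℓ m) ∈ Hset S B ↔ k ∈ Tset S B := Iff.rfl

lemma u_notW (B : Finset (Fin m)) (i) : (V2.u i : V2 ℓ m) ∉ Wset B := by
  rintro ⟨j, hj, h⟩; exact nomatch h

lemma r_notW (B : Finset (Fin m)) : (V2.r : V2 ℓ m) ∉ Wset B := by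
  rintro ⟨j, hj, h⟩; exact nomatch h

lemma w_notW (B : Finset (Fin m)) (j k) : (V2.w j k : V2 ℓ m) ∉ Wset B := by
  rintro ⟨j', hj, h⟩; exact nomatch h

lemma v_mem_W_iff (B : Finset (Fin m)) (i) : (V2.v i : V2 ℓ m) ∈ Wset B ↔ i ∈ B := by
  constructor
  · rintro ⟨j, hj, h⟩
    injection h with h'
    exact h' ▸ hj
  · intro hi; exact ⟨i, hi, rfl⟩

abbrev Rel (S : Fin m → Finset (Fin (3 * ℓ))) (B : Finset (Fin m)) :
    V2 ℓ m → V2 ℓ m → Prop :=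
  fun a b => (G2 ℓ m S).Adj a b ∧ a ∉ Wset B ∧ b ∉ Wset B

lemma step_closed (S : Fin m → Finset (Fin (3 * ℓ))) (B : Finset (Fin m))
    {a b : V2 ℓ m} (ha : a ∈ Hset S B) (hr : Rel S B a b) : b ∈ Hset S B := by
  obtain ⟨hadj, haW, hbW⟩ := hr
  rw [G2, SimpleGraph.fromRel_adj] at hadj
  obtain ⟨hne, h | h⟩ := hadj
  · cases a <;> cases b <;> simp only [baseRel2] at h ⊢ <;> try exact h.elim
    · trivial
    · trivial
    · exact fun hB => (hbW (⟨_, hB, rfl⟩ : _ ∈ Wset B)) |>.elim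
    · rename_i i j k
      have hi : i ∉ B := ha
      exact Finset.mem_biUnion.2 ⟨i, Finset.mem_compl.2 hi, h⟩
  · cases a <;> cases b <;> simp only [baseRel2] at h ⊢ <;> try exact h.elim
    · trivial
    · trivial
    · trivial
    · exact fun hB => (hbW (⟨_, hB, rfl⟩ : _ ∈ Wset B)) |>.elim

lemma reach_u (hℓ : 1 ≤ ℓ) (hm : 1 ≤ m) (S : Fin m → Finset (Fin (3 * ℓ)))
    (B : Finset (Fin m)) (h0 : 0 < ℓ * (3 * m - 1)) :
    ∀ n (hn : n < ℓ * (3 * m - 1)),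
      ReflTransGen (Rel S B) (x2 ℓ m h0) (V2.u ⟨n, hn⟩) := by
  intro n
  induction n with
  | zero => intro hn; exact ReflTransGen.refl
  | succ n ih =>
    intro hn
    have hn' : n < ℓ * (3 * m - 1) := by omega
    refine (ih hn').tail ⟨?_, u_notW B _, u_notW B _⟩
    rw [G2, SimpleGraph.fromRel_adj]
    refine ⟨?_, Or.inl rfl⟩
    intro h
    injection h with h'
    simp only [Fin.mk.injEq] at h'
    omega

lemma reach_r (hℓ : 1 ≤ ℓ) (hm : 1 ≤ m) (S : Fin m → Finset (Fin (3 * ℓ)))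
    (B : Finset (Fin m)) (h0 : 0 < ℓ * (3 * m - 1)) :
    ReflTransGen (Rel S B) (x2 ℓ m h0) V2.r := by
  have hlast : ℓ * (3 * m - 1) - 1 < ℓ * (3 * m - 1) := by omega
  refine (reach_u hℓ hm S B h0 _ hlast).tail ⟨?_, u_notW B _, r_notW B⟩
  rw [G2, SimpleGraph.fromRel_adj]
  exact ⟨fun h => (nomatch h), Or.inl (by simp only [baseRel2]; omega)⟩

lemma reach_v (hℓ : 1 ≤ ℓ) (hm : 1 ≤ m) (S : Fin m → Finset (Fin (3 * ℓ)))
    (B : Finset (Fin m)) (h0 : 0 < ℓ * (3 * m - 1)) (i : Fin m) (hi : i ∉ B) :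
    ReflTransGen (Rel S B) (x2 ℓ m h0) (V2.v i) := by
  refine (reach_r hℓ hm S B h0).tail ⟨?_, r_notW B, ?_⟩
  · rw [G2, SimpleGraph.fromRel_adj]
    exact ⟨fun h => (nomatch h), Or.inl trivial⟩
  · rw [v_mem_W_iff]; exact hi

lemma reach_w (hℓ : 1 ≤ ℓ) (hm : 1 ≤ m) (S : Fin m → Finset (Fin (3 * ℓ)))
    (B : Finset (Fin m)) (h0 : 0 < ℓ * (3 * m - 1)) (j : Fin m) (k : Fin (3 * ℓ))
    (hk : k ∈ Tset S B) :
    ReflTransGen (Rel S B) (x2 ℓ m h0) (V2.w j k) := by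
  obtain ⟨i, hi, hki⟩ := Finset.mem_biUnion.1 hk
  rw [Finset.mem_compl] at hi
  refine (reach_v hℓ hm S B h0 i hi).tail ⟨?_, (v_mem_W_iff B i).not.2 hi, w_notW B j k⟩
  rw [G2, SimpleGraph.fromRel_adj]
  exact ⟨fun h => (nomatch h), Or.inl hki⟩

lemma HW_eq (hℓ : 1 ≤ ℓ) (hm : 1 ≤ m) (S : Fin m → Finset (Fin (3 * ℓ)))
    (B : Finset (Fin m)) (h0 : 0 < ℓ * (3 * m - 1)) :
    HW (G2 ℓ m S) (Wset B) (x2 ℓ m h0) = Hset S B := by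
  ext z
  constructor
  · intro hz
    have hz' : ReflTransGen (Rel S B) (x2 ℓ m h0) z := hz
    clear hz
    induction hz' with
    | refl => trivial
    | tail _ hstep ih => exact step_closed S B ih hstep
  · intro hz
    show ReflTransGen (Rel S B) (x2 ℓ m h0) z
    match z with
    | .u i => exact (Fin.mk_val i) ▸ reach_u hℓ hm S B h0 i.1 i.2
    | .r => exact reach_r hℓ hm S B h0
    | .v i => exact reach_v hℓ hm S B h0 i hz
    | .w j k => exact reach_w hℓ hm S B h0 j k hz

end CardComplAux

/-- If candidate `1` uniquely wins after deleting `W = {v_i : i ∈ B}`, then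
`m − |B| = ℓ`. -/
theorem card_complement_eq_ell (ℓ m : ℕ) (hℓ : 1 ≤ ℓ) (hm : 1 ≤ m)
    (S : Fin m → Finset (Fin (3 * ℓ)))
    (hS3 : ∀ i, (S i).card = 3)
    (hcov : Finset.univ.biUnion S = Finset.univ)
    (B : Finset (Fin m))
    (hwin : wins2 ℓ m S (x2 ℓ m (Nat.mul_pos hℓ (by omega)))
      {z | ∃ i ∈ B, z = V2.v i}) :
    m - B.card = ℓ := by
  classical
  have h0 : 0 < ℓ * (3 * m - 1) := Nat.mul_pos hℓ (by omega)
  unfold wins2 at hwin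
  have hWeq : ({z | ∃ i ∈ B, z = V2.v i} : Set (V2 ℓ m)) = CardComplAux.Wset B := rfl
  rw [hWeq, CardComplAux.HW_eq hℓ hm S B] at hwin
  -- the two finsets
  set F0 : Finset (V2 ℓ m) :=
    (Finset.univ.image (V2.u : Fin (ℓ * (3 * m - 1)) → V2 ℓ m)) ∪
      Bᶜ.image (V2.v : Fin m → V2 ℓ m) with hF0
  set F1 : Finset (V2 ℓ m) :=
    insert V2.r ((Finset.univ ×ˢ CardComplAux.Tset S B).image
      (fun p => V2.w p.1 p.2)) with hF1
  have e0 : CardComplAux.Hset S B ∩ τ2 ℓ m ⁻¹' {0} = ↑F0 := by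
    ext z
    match z with
    | .u i =>
      simp [CardComplAux.mem_Hset_u, CardComplAux.mem_Hset_r, CardComplAux.mem_Hset_v, CardComplAux.mem_Hset_w, τ2, hF0]
    | .r =>
      simp [CardComplAux.mem_Hset_u, CardComplAux.mem_Hset_r, CardComplAux.mem_Hset_v, CardComplAux.mem_Hset_w, τ2, hF0]
    | .v i =>
      simp [CardComplAux.mem_Hset_u, CardComplAux.mem_Hset_r, CardComplAux.mem_Hset_v, CardComplAux.mem_Hset_w, τ2, hF0]
    | .w j k =>
      simp [CardComplAux.mem_Hset_u, CardComplAux.mem_Hset_r, CardComplAux.mem_Hset_v, CardComplAux.mem_Hset_w, τ2, hF0]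
  have e1 : CardComplAux.Hset S B ∩ τ2 ℓ m ⁻¹' {1} = ↑F1 := by
    ext z
    match z with
    | .u i =>
      simp [CardComplAux.mem_Hset_u, CardComplAux.mem_Hset_r, CardComplAux.mem_Hset_v, CardComplAux.mem_Hset_w, τ2, hF1]
    | .r =>
      simp [CardComplAux.mem_Hset_u, CardComplAux.mem_Hset_r, CardComplAux.mem_Hset_v, CardComplAux.mem_Hset_w, τ2, hF1]
    | .v i =>
      simp [CardComplAux.mem_Hset_u, CardComplAux.mem_Hset_r, CardComplAux.mem_Hset_v, CardComplAux.mem_Hset_w, τ2, hF1]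
    | .w j k =>
      simp [CardComplAux.mem_Hset_u, CardComplAux.mem_Hset_r, CardComplAux.mem_Hset_v, CardComplAux.mem_Hset_w, τ2, hF1]
  rw [e0, e1, Set.ncard_coe_finset, Set.ncard_coe_finset] at hwin
  -- cardinalities
  have hu_inj : Function.Injective (V2.u : Fin (ℓ * (3 * m - 1)) → V2 ℓ m) :=
    fun a b h => by injection h
  have hv_inj : Function.Injective (V2.v : Fin m → V2 ℓ m) :=
    fun a b h => by injection h
  have hw_inj : Function.Injective
      (fun p : Fin m × Fin (3 * ℓ) => (V2.w p.1 p.2 : V2 ℓ m)) := by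
    rintro ⟨a, b⟩ ⟨c, d⟩ h
    injection h with h1 h2
    exact Prod.ext h1 h2
  have hdisj : Disjoint (Finset.univ.image (V2.u : Fin (ℓ * (3 * m - 1)) → V2 ℓ m))
      (Bᶜ.image (V2.v : Fin m → V2 ℓ m)) := by
    rw [Finset.disjoint_left]
    rintro a ha hb
    obtain ⟨i, -, rfl⟩ := Finset.mem_image.1 ha
    obtain ⟨j, -, h⟩ := Finset.mem_image.1 hb
    exact nomatch h
  have c0 : F0.card = ℓ * (3 * m - 1) + (m - B.card) := by
    rw [hF0, Finset.card_union_of_disjoint hdisj,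
      Finset.card_image_of_injective _ hu_inj, Finset.card_image_of_injective _ hv_inj,
      Finset.card_univ, Fintype.card_fin, Finset.card_compl, Fintype.card_fin]
  have hrnot : (V2.r : V2 ℓ m) ∉ (Finset.univ ×ˢ CardComplAux.Tset S B).image
      (fun p => V2.w p.1 p.2) := by
    intro h
    obtain ⟨p, -, h⟩ := Finset.mem_image.1 h
    exact nomatch h
  have c1 : F1.card = 1 + m * (CardComplAux.Tset S B).card := by
    rw [hF1, Finset.card_insert_of_notMem hrnot,
      Finset.card_image_of_injective _ hw_inj, Finset.card_product,
      Finset.card_univ, Fintype.card_fin]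
    omega
  rw [c0, c1] at hwin
  -- bounds on |T|
  have hT1 : (CardComplAux.Tset S B).card ≤ 3 * ℓ := by
    have := Finset.card_le_univ (CardComplAux.Tset S B)
    simpa using this
  have hT2 : (CardComplAux.Tset S B).card ≤ 3 * (m - B.card) := by
    calc (CardComplAux.Tset S B).card ≤ ∑ i ∈ Bᶜ, (S i).card :=
          Finset.card_biUnion_le
      _ = Bᶜ.card * 3 := Finset.sum_const_nat (fun i _ => hS3 i)
      _ = 3 * (m - B.card) := by
          rw [Finset.card_compl, Fintype.card_fin]; ring
  -- arithmetic
  set t := m - B.card with ht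
  set c := (CardComplAux.Tset S B).card with hc
  have h1 : m * c ≤ m * (3 * ℓ) := Nat.mul_le_mul_left _ hT1
  have h2 : m * c ≤ m * (3 * t) := Nat.mul_le_mul_left _ hT2
  have hL : ℓ * (3 * m - 1) + ℓ = 3 * (ℓ * m) := by
    have : 3 * m - 1 + 1 = 3 * m := by omega
    calc ℓ * (3 * m - 1) + ℓ = ℓ * (3 * m - 1 + 1) := by ring
      _ = 3 * (ℓ * m) := by rw [this]; ring
  have htle : t ≤ ℓ := by
    have e1' : m * (3 * ℓ) = 3 * (ℓ * m) := by ring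
    omega
  have htge : ℓ ≤ t := by
    by_contra hlt
    push_neg at hlt
    obtain ⟨s, rfl⟩ : ∃ s, ℓ = t + s + 1 := ⟨ℓ - t - 1, by omega⟩
    have q1 : m * (3 * t) = 3 * (m * t) := by ring
    have q2 : 3 * ((t + s + 1) * m) = 3 * (m * t) + 3 * (m * s) + 3 * m := by ring
    have q3 : s ≤ m * s := Nat.le_mul_of_pos_left s hm
    omega
  omega
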